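/- Let g ∈ L²(ℝ^d) and let Λ ⊆ ℝ^d be a lattice with dual lattice Λ*. Let (c_λ) be a finitely supported complex sequence, Rg(t) = g(−t), and set f = Σ_{λ∈Λ} c_λ T_λ (Rg) and f_× = Σ_{λ∈Λ} conj(c_λ) T_λ (Rg). Then |V_g f(x, ω)| = |V_g f_×(x, ω)| for all x ∈ ℝ^d and all ω ∈ Λ*. -/

import Mathlib

/-!
The substitution `t ↦ x + λ - t` in the STFT integral shows that every reflected translate
`T_λ(Rg) = g(λ - ·)` satisfies `V_g(T_λ Rg)(x, ω) = e^{-2πi ω·(x+λ)} · conj (V_g(T_λ Rg)(x, ω))`.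
For `ω ∈ Λ*` and `λ ∈ Λ` the factor `e^{-2πi ω·λ}` is `1`, so the phase `e^{-2πi ω·x}` is the same
for all `λ ∈ Λ`, and linearity of `V_g` gives `V_g f(x, ω) = e^{-2πi ω·x} · conj (V_g f_×(x, ω))`.
-/

open MeasureTheory Real Matrix Finset

/-- The short-time Fourier transform `V_g f(x,ω) = ∫ f(t) conj(g(t−x)) e^{-2πi ω·t} dt`. -/
noncomputable def STFT {d : ℕ} (g f : (Fin d → ℝ) → ℂ) (x ω : Fin d → ℝ) : ℂ :=
  ∫ t : Fin d → ℝ,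
    f t * (starRingEnd ℂ) (g (t - x)) *
      Complex.exp (-(2 * π * Complex.I) * (∑ i, ω i * t i : ℝ))

open ComplexConjugate

lemma norm_exp_neg_two_pi_I_mul_ofReal (r : ℝ) :
    ‖Complex.exp (-(2 * π * Complex.I) * r)‖ = 1 := by
  simp [Complex.norm_exp]

lemma integrable_STFT_integrand {d : ℕ} {g f : (Fin d → ℝ) → ℂ} (hg : MemLp g 2 volume)
    (hf : MemLp f 2 volume) (x ω : Fin d → ℝ) :
    Integrable (fun t => f t * conj (g (t - x)) *
      Complex.exp (-(2 * π * Complex.I) * (∑ i, ω i * t i : ℝ))) := by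
  have hgx : MemLp (fun t => conj (g (t - x))) 2 volume :=
    (hg.comp_measurePreserving (measurePreserving_sub_right volume x)).star
  refine (hf.integrable_mul hgx).mul_bdd (c := 1) (Continuous.aestronglyMeasurable ?_)
    (Filter.Eventually.of_forall fun t => (norm_exp_neg_two_pi_I_mul_ofReal _).le)
  fun_prop

lemma STFT_eq_integral_dotProduct {d : ℕ} (g f : (Fin d → ℝ) → ℂ) (x ω : Fin d → ℝ) :
    STFT g f x ω = ∫ t, f t * conj (g (t - x)) *
      Complex.exp (-(2 * π * Complex.I) * (ω ⬝ᵥ t : ℝ)) := rfl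

lemma STFT_const_mul {d : ℕ} (g f : (Fin d → ℝ) → ℂ) (a : ℂ) (x ω : Fin d → ℝ) :
    STFT g (fun t => a * f t) x ω = a * STFT g f x ω := by
  simp only [STFT, mul_assoc, integral_const_mul]

lemma STFT_finset_sum {d : ℕ} {ι : Type*} {g : (Fin d → ℝ) → ℂ} (hg : MemLp g 2 volume)
    (s : Finset ι) {f : ι → (Fin d → ℝ) → ℂ} (hf : ∀ i ∈ s, MemLp (f i) 2 volume)
    (x ω : Fin d → ℝ) :
    STFT g (fun t => ∑ i ∈ s, f i t) x ω = ∑ i ∈ s, STFT g (f i) x ω := by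
  simp only [STFT, Finset.sum_mul]
  exact integral_finsetSum s fun i hi => integrable_STFT_integrand hg (hf i hi) x ω

lemma STFT_reflect_eq_mul_conj {d : ℕ} (g : (Fin d → ℝ) → ℂ) (lam x ω : Fin d → ℝ) :
    STFT g (fun t => g (lam - t)) x ω =
      Complex.exp (-(2 * π * Complex.I) * (ω ⬝ᵥ (x + lam) : ℝ)) *
        conj (STFT g (fun t => g (lam - t)) x ω) := by
  rw [STFT_eq_integral_dotProduct, ← integral_conj, ← integral_const_mul,
    ← integral_sub_left_eq_self _ volume (x + lam)]
  congr 1 with t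
  have hphase : Complex.exp (-(2 * π * Complex.I) * (ω ⬝ᵥ (x + lam - t) : ℝ)) =
      Complex.exp (-(2 * π * Complex.I) * (ω ⬝ᵥ (x + lam) : ℝ)) *
        conj (Complex.exp (-(2 * π * Complex.I) * (ω ⬝ᵥ t : ℝ))) := by
    rw [← Complex.exp_conj, ← Complex.exp_add, dotProduct_sub]
    simp only [map_mul, map_neg, Complex.conj_ofReal, Complex.conj_I, map_ofNat]
    push_cast
    ring_nf
  simp only [map_mul, Complex.conj_conj]
  rw [show lam - (x + lam - t) = t - x by abel, show x + lam - t - x = lam - t by abel, hphase]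
  ring

lemma STFT_reflect_eq_mul_conj_of_int {d : ℕ} (g : (Fin d → ℝ) → ℂ) (lam x ω : Fin d → ℝ)
    (n : ℤ) (hn : ω ⬝ᵥ lam = n) :
    STFT g (fun t => g (lam - t)) x ω =
      Complex.exp (-(2 * π * Complex.I) * (ω ⬝ᵥ x : ℝ)) *
        conj (STFT g (fun t => g (lam - t)) x ω) := by
  refine (STFT_reflect_eq_mul_conj g lam x ω).trans (congrArg (· * _) ?_)
  rw [dotProduct_add, hn, Complex.ofReal_add, mul_add, Complex.exp_add, Complex.ofReal_intCast,
    show -(2 * π * Complex.I) * n = ((-n : ℤ) : ℂ) * (2 * π * Complex.I) by push_cast; ring,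
    Complex.exp_int_mul_two_pi_mul_I, mul_one]

lemma norm_sum_mul_eq_norm_sum_conj_mul {ι : Type*} (s : Finset ι) (c V : ι → ℂ) {u : ℂ}
    (hu : ‖u‖ = 1) (hV : ∀ i ∈ s, V i = u * conj (V i)) :
    ‖∑ i ∈ s, c i * V i‖ = ‖∑ i ∈ s, conj (c i) * V i‖ := by
  have : ∑ i ∈ s, c i * V i = u * conj (∑ i ∈ s, conj (c i) * V i) := by
    simp only [map_sum, map_mul, Complex.conj_conj, Finset.mul_sum]
    exact Finset.sum_congr rfl fun i hi => by rw [mul_left_comm, ← hV i hi]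
  rw [this, norm_mul, hu, one_mul, RCLike.norm_conj]

lemma dotProduct_inv_transpose_mulVec {n : Type*} [Fintype n] [DecidableEq n]
    {A : Matrix n n ℝ} (hA : IsUnit A.det) (v u : n → ℝ) :
    ((Aᵀ)⁻¹ *ᵥ v) ⬝ᵥ (A *ᵥ u) = v ⬝ᵥ u := by
  rw [dotProduct_mulVec, ← mulVec_transpose, mulVec_mulVec,
    mul_nonsing_inv _ (by simpa using hA), one_mulVec]

lemma STFT_sum_mul_reflect_translate {d : ℕ} {ι : Type*} {g : (Fin d → ℝ) → ℂ}
    (hg : MemLp g 2 volume) (s : Finset ι) (a : ι → ℂ) (lam : ι → Fin d → ℝ) (x ω : Fin d → ℝ) :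
    STFT g (fun t => ∑ i ∈ s, a i * g (-(t - lam i))) x ω =
      ∑ i ∈ s, a i * STFT g (fun t => g (lam i - t)) x ω := by
  simp only [neg_sub]
  have hterm (i : ι) : MemLp (fun t => a i * g (lam i - t)) 2 volume :=
    (hg.comp_measurePreserving (Measure.measurePreserving_sub_left volume (lam i))).const_mul (a i)
  rw [STFT_finset_sum hg s fun i _ => hterm i]
  simp only [STFT_const_mul]

/-- Spectrogram equality on `ℝ^d × Λ*`: for `g ∈ L²(ℝ^d)`, a lattice `Λ = Aℤ^d` with dual
`Λ* = A^{-T}ℤ^d`, a finitely supported sequence `(c_λ)`, and the reflection `Rg = g(−·)`,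
the functions `f = ∑_λ c_λ T_λ(Rg)` and `f_× = ∑_λ conj(c_λ) T_λ(Rg)` satisfy
`|V_g f(x,ω)| = |V_g f_×(x,ω)|` for all `x ∈ ℝ^d` and all `ω ∈ Λ*`. -/
theorem stmt19 {d : ℕ} (A : Matrix (Fin d) (Fin d) ℝ) (hA : IsUnit A.det)
    (g : (Fin d → ℝ) → ℂ) (hg : MemLp g 2 (volume : Measure (Fin d → ℝ)))
    (c : (Fin d → ℤ) → ℂ) (hfin : (Function.support c).Finite)
    (x : Fin d → ℝ) (w : Fin d → ℤ) :
    ‖STFT g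
        (fun t => ∑ z ∈ hfin.toFinset,
          c z * g (-(t - A.mulVec (fun i => (z i : ℝ)))))
        x ((Aᵀ)⁻¹.mulVec (fun i => (w i : ℝ)))‖ =
      ‖STFT g
        (fun t => ∑ z ∈ hfin.toFinset,
          (starRingEnd ℂ) (c z) * g (-(t - A.mulVec (fun i => (z i : ℝ)))))
        x ((Aᵀ)⁻¹.mulVec (fun i => (w i : ℝ)))‖ := by
  have hdual (z : Fin d → ℤ) :
      (Aᵀ)⁻¹ *ᵥ (fun i => (w i : ℝ)) ⬝ᵥ A *ᵥ (fun i => (z i : ℝ)) = ((w ⬝ᵥ z : ℤ) : ℝ) := by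
    rw [dotProduct_inv_transpose_mulVec hA]
    push_cast [dotProduct]
    rfl
  rw [STFT_sum_mul_reflect_translate hg, STFT_sum_mul_reflect_translate hg]
  exact norm_sum_mul_eq_norm_sum_conj_mul _ _ _ (norm_exp_neg_two_pi_I_mul_ofReal _)
    fun z _ => STFT_reflect_eq_mul_conj_of_int g _ x _ _ (hdual z)
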